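/- Let e=(u,v) be a tight edge (a vital edge saturated in some maximum (s,t)-flow). Let C(e) be a mincut for e and let C_{v,u} be the (s,t)-cut of least capacity among cuts containing v but not u (i.e., v on the source side and u on the sink side). Then c(C(e)) < c(C_{v,u}). Consequently, a mincut for e coincides with an (s,t)-cut of least capacity separating u and v. -/

import Mathlib

/-!
Let `f` be a maximum flow saturating `e = (u, v)`. As `e` enters `C_{v,u}`, the value of `f` is
at most `c(C_{v,u}) - c(e)`. As `e` is vital, every minimum cut of `G - e` uses `e`, so it is a cut
of `G` in which `e` contributes, of capacity `f*(G - e) + c(e) < f* + c(e)`. With max-flow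
min-cut, `f* ≤ val f`, this gives `c(C(e)) < f* + c(e) ≤ c(C_{v,u})`. Max-flow min-cut is proved
with the residual graph: if `t` were reachable from `s`, pushing a small enough amount along a
residual walk would increase the value of `f`; otherwise the reachable set is a cut of capacity
`val f`.
-/

open Finset

variable {V : Type*} [Fintype V] [DecidableEq V]

/-- capacity of the cut given by the source-side vertex set `C`:
total capacity of edges with tail in `C` and head outside `C`. -/
noncomputable def cutCap (E : Finset (V × V)) (w : V × V → ℝ) (C : Finset V) : ℝ :=
  ∑ e ∈ E.filter (fun e => e.1 ∈ C ∧ e.2 ∉ C), w e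

/-- `C` is an (s,t)-cut. -/
def IsCut (s t : V) (C : Finset V) : Prop := s ∈ C ∧ t ∉ C

/-- edge `e` is a contributing (outgoing) edge of the cut `C`. -/
def Contributes (e : V × V) (C : Finset V) : Prop := e.1 ∈ C ∧ e.2 ∉ C

/-- `f` is a feasible (s,t)-flow on edge set `E` with capacities `w`. -/
structure IsFlow (E : Finset (V × V)) (w : V × V → ℝ) (s t : V) (f : V × V → ℝ) : Prop where
  nonneg : ∀ e ∈ E, 0 ≤ f e
  le_cap : ∀ e ∈ E, f e ≤ w e
  support : ∀ e, e ∉ E → f e = 0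
  conserve : ∀ v, v ≠ s → v ≠ t →
    ∑ e ∈ E.filter (fun e => e.1 = v), f e = ∑ e ∈ E.filter (fun e => e.2 = v), f e

/-- value of an (s,t)-flow: the net flow out of `s`. -/
noncomputable def flowValue (E : Finset (V × V)) (s : V) (f : V × V → ℝ) : ℝ :=
  ∑ e ∈ E.filter (fun e => e.1 = s), f e - ∑ e ∈ E.filter (fun e => e.2 = s), f e

/-- `f` is a maximum (s,t)-flow. -/
def IsMaxFlow (E : Finset (V × V)) (w : V × V → ℝ) (s t : V) (f : V × V → ℝ) : Prop :=
  IsFlow E w s t f ∧ ∀ g, IsFlow E w s t g → flowValue E s g ≤ flowValue E s f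

/-- capacity of a minimum (s,t)-cut. -/
noncomputable def minCutCap (E : Finset (V × V)) (w : V × V → ℝ) (s t : V) : ℝ :=
  sInf {x | ∃ C : Finset V, IsCut s t C ∧ cutCap E w C = x}

/-- `e` is a vital edge: deleting it strictly decreases the min (s,t)-cut capacity. -/
def Vital (E : Finset (V × V)) (w : V × V → ℝ) (s t : V) (e : V × V) : Prop :=
  e ∈ E ∧ minCutCap (E.erase e) w s t < minCutCap E w s t

/-- `C` is a mincut for the edge `e`: a least-capacity (s,t)-cut in which `e` contributes. -/
def IsMincutFor (E : Finset (V × V)) (w : V × V → ℝ) (s t : V) (e : V × V)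
    (C : Finset V) : Prop :=
  IsCut s t C ∧ Contributes e C ∧
    ∀ C', IsCut s t C' → Contributes e C' → cutCap E w C ≤ cutCap E w C'

/-- total flow on edges leaving the cut `C`. -/
noncomputable def flowOut (E : Finset (V × V)) (f : V × V → ℝ) (C : Finset V) : ℝ :=
  ∑ e ∈ E.filter (fun e => e.1 ∈ C ∧ e.2 ∉ C), f e

/-- total flow on edges entering the cut `C`. -/
noncomputable def flowIn (E : Finset (V × V)) (f : V × V → ℝ) (C : Finset V) : ℝ :=
  ∑ e ∈ E.filter (fun e => e.1 ∉ C ∧ e.2 ∈ C), f e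

section Flows

omit [Fintype V]

variable {E : Finset (V × V)} {w f g : V × V → ℝ} {s t : V}

noncomputable def netOut (E : Finset (V × V)) (f : V × V → ℝ) (v : V) : ℝ :=
  ∑ e ∈ E with e.1 = v, f e - ∑ e ∈ E with e.2 = v, f e

theorem sum_netOut (E : Finset (V × V)) (f : V × V → ℝ) (D : Finset V) :
    ∑ v ∈ D, netOut E f v = flowOut E f D - flowIn E f D := by
  simp only [netOut, sum_sub_distrib, sum_fiberwise_eq_sum_filter]
  rw [← sum_filter_add_sum_filter_not (E.filter (·.1 ∈ D)) (·.2 ∈ D),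
    ← sum_filter_add_sum_filter_not (E.filter (·.2 ∈ D)) (·.1 ∈ D)]
  simp only [filter_filter, flowOut, flowIn, and_comm]
  ring

theorem flowValue_eq_netOut (E : Finset (V × V)) (s : V) (f : V × V → ℝ) :
    flowValue E s f = netOut E f s :=
  rfl

theorem IsFlow.flowValue_eq_flowOut_sub_flowIn (hf : IsFlow E w s t f) {D : Finset V}
    (hs : s ∈ D) (ht : t ∉ D) :
    flowValue E s f = flowOut E f D - flowIn E f D := by
  rw [flowValue_eq_netOut, ← sum_netOut, sum_eq_single_of_mem s hs fun v hv hvs ↦ ?_]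
  exact sub_eq_zero.mpr (hf.conserve v hvs (ne_of_mem_of_not_mem hv ht))

theorem IsFlow.flowValue_add_le_cutCap (hf : IsFlow E w s t f) {D : Finset V} (hD : IsCut s t D)
    {a : V × V} (ha : a ∈ E) (ha₁ : a.1 ∉ D) (ha₂ : a.2 ∈ D) :
    flowValue E s f + f a ≤ cutCap E w D := by
  have hout : flowOut E f D ≤ cutCap E w D :=
    sum_le_sum fun e he ↦ hf.le_cap e (mem_filter.mp he).1
  have hin : f a ≤ flowIn E f D :=
    single_le_sum (fun e he ↦ hf.nonneg e (mem_filter.mp he).1) (mem_filter.mpr ⟨ha, ha₁, ha₂⟩)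
  linarith [hf.flowValue_eq_flowOut_sub_flowIn hD.1 hD.2]

structure IsPseudoflow (E : Finset (V × V)) (w g : V × V → ℝ) : Prop where
  nonneg : ∀ e ∈ E, 0 ≤ g e
  le_cap : ∀ e ∈ E, g e ≤ w e
  support : ∀ e, e ∉ E → g e = 0

theorem IsFlow.isPseudoflow (hf : IsFlow E w s t f) : IsPseudoflow E w f :=
  ⟨hf.nonneg, hf.le_cap, hf.support⟩

theorem IsPseudoflow.isFlow (hg : IsPseudoflow E w g)
    (hcons : ∀ v, v ≠ s → v ≠ t → netOut E g v = 0) : IsFlow E w s t g :=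
  ⟨hg.nonneg, hg.le_cap, hg.support, fun v hs ht ↦ sub_eq_zero.mp (hcons v hs ht)⟩

theorem IsPseudoflow.add_single (hg : IsPseudoflow E w g) {a : V × V} (ha : a ∈ E) {d : ℝ}
    (h₀ : 0 ≤ g a + d) (h₁ : g a + d ≤ w a) : IsPseudoflow E w (g + Pi.single a d) := by
  refine ⟨fun e he ↦ ?_, fun e he ↦ ?_, fun e he ↦ ?_⟩ <;> obtain rfl | hea := eq_or_ne e a
  all_goals simp_all [hg.nonneg, hg.le_cap, hg.support]

theorem netOut_add_single (E : Finset (V × V)) (g : V × V → ℝ) {a : V × V} (ha : a ∈ E) (d : ℝ) :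
    netOut E (g + Pi.single a d) = netOut E g + (Pi.single a.1 d - Pi.single a.2 d) := by
  ext v
  simp only [netOut, Pi.add_apply, sum_add_distrib, sum_pi_single']
  simp only [mem_filter, ha, true_and, Pi.sub_apply, Pi.single_apply, eq_comm (a := v)]
  ring

theorem abs_add_single_sub_le (g f : V × V → ℝ) (a : V × V) (d : ℝ) (e : V × V) :
    |(g + Pi.single a d : V × V → ℝ) e - f e| ≤ |g e - f e| + |d| := by
  obtain rfl | hea := eq_or_ne e a
  · simpa [add_sub_right_comm] using abs_add_le (g e - f e) d
  · simp [hea]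

def Residual (E : Finset (V × V)) (w f : V × V → ℝ) (a b : V) : Prop :=
  ((a, b) ∈ E ∧ f (a, b) < w (a, b)) ∨ ((b, a) ∈ E ∧ 0 < f (b, a))

theorem IsPseudoflow.exists_push_of_reflTransGen (hf : IsPseudoflow E w f) {x : V}
    (hx : Relation.ReflTransGen (Residual E w f) s x) {η : ℝ} (hη : 0 < η) :
    ∃ δ > 0, δ ≤ η ∧ ∃ g, IsPseudoflow E w g ∧ (∀ e, |g e - f e| ≤ η) ∧
      netOut E g = netOut E f + (Pi.single s δ - Pi.single x δ) := by
  -- A walk may use an edge several times; the closeness bound `η` keeps every later push on an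
  -- edge within the residual capacity left by the earlier ones.
  induction hx generalizing η with
  | refl => exact ⟨η, hη, le_rfl, f, hf, by simp [hη.le], by simp⟩
  | @tail b c _ hbc ih =>
    rcases hbc with ⟨ha, hslack⟩ | ⟨ha, hflow⟩
    · obtain ⟨δ, hδ, hδη, g, hg, hgf, hgn⟩ :=
        ih (η := min (η / 2) ((w (b, c) - f (b, c)) / 2)) (by simp [hη, hslack])
      have hδ' := hδη.trans (min_le_right _ _)
      have hg' := abs_le.mp (hgf (b, c))
      refine ⟨δ, hδ, by linarith [min_le_left (η / 2) ((w (b, c) - f (b, c)) / 2)],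
        g + Pi.single (b, c) δ, hg.add_single ha (by linarith [hg.nonneg _ ha]) ?_, fun e ↦ ?_, ?_⟩
      · linarith [min_le_right (η / 2) ((w (b, c) - f (b, c)) / 2)]
      · linarith [abs_add_single_sub_le g f (b, c) δ e, hgf e, abs_of_pos hδ,
          min_le_left (η / 2) ((w (b, c) - f (b, c)) / 2)]
      · rw [netOut_add_single E g ha, hgn]
        abel
    · obtain ⟨δ, hδ, hδη, g, hg, hgf, hgn⟩ :=
        ih (η := min (η / 2) (f (c, b) / 2)) (by simp [hη, hflow])
      have hδ' := hδη.trans (min_le_right _ _)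
      have hg' := abs_le.mp (hgf (c, b))
      refine ⟨δ, hδ, by linarith [min_le_left (η / 2) (f (c, b) / 2)],
        g + Pi.single (c, b) (-δ), hg.add_single ha ?_ (by linarith [hg.le_cap _ ha]),
        fun e ↦ ?_, ?_⟩
      · linarith [min_le_right (η / 2) (f (c, b) / 2)]
      · linarith [abs_add_single_sub_le g f (c, b) (-δ) e, hgf e, abs_neg δ, abs_of_pos hδ,
          min_le_left (η / 2) (f (c, b) / 2)]
      · rw [netOut_add_single E g ha, hgn, Pi.single_neg, Pi.single_neg]
        abel

theorem IsMaxFlow.not_reflTransGen_residual (hf : IsMaxFlow E w s t f) (hst : s ≠ t) :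
    ¬ Relation.ReflTransGen (Residual E w f) s t := by
  intro hreach
  obtain ⟨δ, hδ, -, g, hg, -, hgn⟩ := hf.1.isPseudoflow.exists_push_of_reflTransGen hreach one_pos
  have hnet (v : V) : netOut E g v = netOut E f v + (Pi.single s δ - Pi.single t δ : V → ℝ) v :=
    congrFun hgn v
  have hgflow : IsFlow E w s t g := hg.isFlow fun v hvs hvt ↦ by
    rw [hnet, Pi.sub_apply, Pi.single_eq_of_ne hvs, Pi.single_eq_of_ne hvt, netOut,
      hf.1.conserve v hvs hvt]
    ring
  have hval : flowValue E s g = flowValue E s f + δ := by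
    simpa [flowValue_eq_netOut, hst] using hnet s
  linarith [hf.2 g hgflow]

end Flows

section Cuts

variable {E : Finset (V × V)} {w f : V × V → ℝ} {s t : V}

theorem IsMaxFlow.exists_cutCap_eq_flowValue (hf : IsMaxFlow E w s t f) (hst : s ≠ t) :
    ∃ R, IsCut s t R ∧ cutCap E w R = flowValue E s f := by
  classical
  set R : Finset V := {x | Relation.ReflTransGen (Residual E w f) s x}
  have hR {x : V} : x ∈ R ↔ Relation.ReflTransGen (Residual E w f) s x := by simp [R]
  have hsat : flowOut E f R = cutCap E w R := sum_congr rfl fun e he ↦ by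
    obtain ⟨heE, he₁, he₂⟩ := mem_filter.mp he
    by_contra hne
    exact he₂ (hR.mpr ((hR.mp he₁).tail
      (Or.inl ⟨heE, (hf.1.le_cap e heE).lt_of_ne hne⟩)))
  have hzero : flowIn E f R = 0 := sum_eq_zero fun e he ↦ by
    obtain ⟨heE, he₁, he₂⟩ := mem_filter.mp he
    by_contra hne
    exact he₁ (hR.mpr ((hR.mp he₂).tail
      (Or.inr ⟨heE, (hf.1.nonneg e heE).lt_of_ne' hne⟩)))
  have hcut : IsCut s t R := ⟨hR.mpr .refl, fun ht ↦ hf.not_reflTransGen_residual hst (hR.mp ht)⟩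
  exact ⟨R, hcut, by rw [hf.1.flowValue_eq_flowOut_sub_flowIn hcut.1 hcut.2, hsat, hzero, sub_zero]⟩

theorem finite_cutCaps (E : Finset (V × V)) (w : V × V → ℝ) (s t : V) :
    {x | ∃ C : Finset V, IsCut s t C ∧ cutCap E w C = x}.Finite :=
  (Set.finite_range (cutCap E w)).subset <| by rintro _ ⟨C, -, rfl⟩; exact ⟨C, rfl⟩

theorem minCutCap_le (E : Finset (V × V)) (w : V × V → ℝ) {D : Finset V} (hD : IsCut s t D) :
    minCutCap E w s t ≤ cutCap E w D :=
  csInf_le (finite_cutCaps E w s t).bddBelow ⟨D, hD, rfl⟩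

theorem exists_cutCap_eq_minCutCap (E : Finset (V × V)) (w : V × V → ℝ) (hst : s ≠ t) :
    ∃ D, IsCut s t D ∧ cutCap E w D = minCutCap E w s t := by
  have hne : {x | ∃ C : Finset V, IsCut s t C ∧ cutCap E w C = x}.Nonempty :=
    ⟨_, univ.erase t, ⟨mem_erase.mpr ⟨hst, mem_univ s⟩, notMem_erase t _⟩, rfl⟩
  exact hne.csInf_mem (finite_cutCaps E w s t)

theorem IsMaxFlow.minCutCap_le_flowValue (hf : IsMaxFlow E w s t f) (hst : s ≠ t) :
    minCutCap E w s t ≤ flowValue E s f := by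
  obtain ⟨R, hR, hcap⟩ := hf.exists_cutCap_eq_flowValue hst
  exact hcap ▸ minCutCap_le E w hR

end Cuts

section VitalEdges

variable {E : Finset (V × V)} {w : V × V → ℝ} {s t : V} {a : V × V}

omit [Fintype V] in
theorem cutCap_eq_cutCap_erase_add (w : V × V → ℝ) (ha : a ∈ E) (D : Finset V) :
    cutCap E w D = cutCap (E.erase a) w D + if a.1 ∈ D ∧ a.2 ∉ D then w a else 0 := by
  unfold cutCap
  rw [filter_erase]
  split_ifs with h
  · rw [sum_erase_eq_sub (mem_filter.mpr ⟨ha, h⟩), sub_add_cancel]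
  · rw [erase_eq_of_notMem fun hm : a ∈ E.filter (fun e ↦ e.1 ∈ D ∧ e.2 ∉ D) ↦
      h (mem_filter.mp hm).2, add_zero]

theorem Vital.exists_cut_contributes (hvit : Vital E w s t a) (hst : s ≠ t) :
    ∃ D, IsCut s t D ∧ Contributes a D ∧ cutCap E w D = minCutCap (E.erase a) w s t + w a := by
  obtain ⟨D, hD, hDmin⟩ := exists_cutCap_eq_minCutCap (E.erase a) w hst
  have hcap := cutCap_eq_cutCap_erase_add w hvit.1 D
  by_cases ha : a.1 ∈ D ∧ a.2 ∉ D
  · exact ⟨D, hD, ha, by rw [hcap, if_pos ha, hDmin]⟩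
  · rw [if_neg ha, add_zero, hDmin] at hcap
    linarith [hvit.2, minCutCap_le E w hD]

theorem IsMincutFor.cutCap_lt_minCutCap_add {C : Finset V} (hC : IsMincutFor E w s t a C)
    (hvit : Vital E w s t a) (hst : s ≠ t) :
    cutCap E w C < minCutCap E w s t + w a := by
  obtain ⟨D, hD, ha, hcap⟩ := hvit.exists_cut_contributes hst
  linarith [hC.2.2 D hD ha, hvit.2]

end VitalEdges

theorem tight_edge_mincut_separation_general (E : Finset (V × V)) (w : V × V → ℝ) (s t : V)
    (hst : s ≠ t) (e : V × V)
    (hvit : Vital E w s t e)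
    (htight : ∃ f, IsMaxFlow E w s t f ∧ f e = w e)
    (C : Finset V) (hC : IsMincutFor E w s t e C)
    (Cvu : Finset V) (hCvu : IsCut s t Cvu ∧ e.2 ∈ Cvu ∧ e.1 ∉ Cvu)
    (hCvuMin : ∀ C', IsCut s t C' → e.2 ∈ C' → e.1 ∉ C' →
      cutCap E w Cvu ≤ cutCap E w C') :
    cutCap E w C < cutCap E w Cvu ∧
      (∀ C', IsCut s t C' →
        ((e.1 ∈ C' ∧ e.2 ∉ C') ∨ (e.2 ∈ C' ∧ e.1 ∉ C')) →
        cutCap E w C ≤ cutCap E w C') := by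
  obtain ⟨f, hf, hfe⟩ := htight
  have hC_lt : cutCap E w C < minCutCap E w s t + w e := hC.cutCap_lt_minCutCap_add hvit hst
  have hmaxflow : minCutCap E w s t ≤ flowValue E s f := hf.minCutCap_le_flowValue hst
  have hCvu_ge : flowValue E s f + f e ≤ cutCap E w Cvu :=
    hf.1.flowValue_add_le_cutCap hCvu.1 hvit.1 hCvu.2.2 hCvu.2.1
  have hlt : cutCap E w C < cutCap E w Cvu := by linarith
  refine ⟨hlt, fun C' hC' hsep ↦ ?_⟩
  rcases hsep with huv | hvu
  · exact hC.2.2 C' hC' huv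
  · exact hlt.le.trans (hCvuMin C' hC' hvu.1 hvu.2)

/-- for a tight edge `e = (u,v)`, the capacity of a mincut for `e` is strictly
smaller than the least capacity of an (s,t)-cut containing `v` but not `u`;
consequently a mincut for `e` is an (s,t)-cut of least capacity separating `u`
and `v`. -/
theorem tight_edge_mincut_separation (E : Finset (V × V)) (w : V × V → ℝ) (s t : V)
    (hst : s ≠ t) (hpos : ∀ e ∈ E, 0 < w e) (e : V × V) (he : e ∈ E)
    (hvit : Vital E w s t e)
    (htight : ∃ f, IsMaxFlow E w s t f ∧ f e = w e)
    (C : Finset V) (hC : IsMincutFor E w s t e C)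
    (Cvu : Finset V) (hCvu : IsCut s t Cvu ∧ e.2 ∈ Cvu ∧ e.1 ∉ Cvu)
    (hCvuMin : ∀ C', IsCut s t C' → e.2 ∈ C' → e.1 ∉ C' →
      cutCap E w Cvu ≤ cutCap E w C') :
    cutCap E w C < cutCap E w Cvu ∧
      (∀ C', IsCut s t C' →
        ((e.1 ∈ C' ∧ e.2 ∉ C') ∨ (e.2 ∈ C' ∧ e.1 ∉ C')) →
        cutCap E w C ≤ cutCap E w C') :=
  tight_edge_mincut_separation_general E w s t hst e hvit htight C hC Cvu hCvu hCvuMin
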